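/- Let d ≥ 1, let μ be the Haar probability measure on the unitary group U(d) (the group of d×d complex unitary matrices, a compact topological group), and let ρ, H be d×d complex matrices with Tr(ρ) = 1. Then ∫_{U(d)} Tr(U ρ U† H) dμ(U) = Tr(H)/d. -/
import Mathlib

open MeasureTheory Matrix

/-- Eq. (19) of the paper: the first Haar moment of `f(x,U) = Tr(U ρ U† H)`,
for `ρ` with unit trace, equals `Tr(H)/d`. -/
theorem haar_first_moment_trace
    (d : ℕ) (hd : 1 ≤ d)
    [MeasurableSpace (Matrix.unitaryGroup (Fin d) ℂ)]
    [BorelSpace (Matrix.unitaryGroup (Fin d) ℂ)]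
    (μ : Measure (Matrix.unitaryGroup (Fin d) ℂ))
    [μ.IsHaarMeasure] [IsProbabilityMeasure μ]
    (ρ H : Matrix (Fin d) (Fin d) ℂ) (hρ : ρ.trace = 1) :
    ∫ U : Matrix.unitaryGroup (Fin d) ℂ,
        ((U : Matrix (Fin d) (Fin d) ℂ) * ρ * (U : Matrix (Fin d) (Fin d) ℂ)ᴴ * H).trace ∂μ
      = H.trace / (d : ℂ) := by
  classical
  let F : Matrix.unitaryGroup (Fin d) ℂ → Matrix (Fin d) (Fin d) ℂ := fun U =>
    (U : Matrix (Fin d) (Fin d) ℂ) * ρ * (U : Matrix (Fin d) (Fin d) ℂ)ᴴ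
  have hcoe : Continuous fun U : Matrix.unitaryGroup (Fin d) ℂ =>
      (U : Matrix (Fin d) (Fin d) ℂ) := continuous_subtype_val
  have hFcont : ∀ i j, Continuous fun U : Matrix.unitaryGroup (Fin d) ℂ => F U i j := fun i j =>
    (((hcoe.matrix_mul continuous_const).matrix_mul hcoe.matrix_conjTranspose)).matrix_elem i j
  -- entries of a unitary matrix are bounded by 1
  have hUbd : ∀ (U : Matrix.unitaryGroup (Fin d) ℂ) (a b : Fin d),
      ‖(U : Matrix (Fin d) (Fin d) ℂ) a b‖ ≤ 1 := by
    intro U a b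
    have hu : (U : Matrix (Fin d) (Fin d) ℂ) * (U : Matrix (Fin d) (Fin d) ℂ)ᴴ = 1 := by
      have := U.2
      rw [Matrix.mem_unitaryGroup_iff] at this
      simpa [Matrix.star_eq_conjTranspose] using this
    have h1 : ((U : Matrix (Fin d) (Fin d) ℂ) * (U : Matrix (Fin d) (Fin d) ℂ)ᴴ) a a = 1 := by
      rw [hu, Matrix.one_apply_eq]
    have h2 : ((∑ k, Complex.normSq ((U : Matrix (Fin d) (Fin d) ℂ) a k) : ℝ) : ℂ) = 1 := by
      rw [← h1]
      push_cast
      simp [Matrix.mul_apply, Matrix.conjTranspose_apply, Complex.mul_conj]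
    have h3 : (∑ k, Complex.normSq ((U : Matrix (Fin d) (Fin d) ℂ) a k) : ℝ) = 1 := by
      exact_mod_cast h2
    have h4 : Complex.normSq ((U : Matrix (Fin d) (Fin d) ℂ) a b) ≤ 1 := by
      rw [← h3]
      exact Finset.single_le_sum (f := fun k => Complex.normSq ((U : Matrix (Fin d) (Fin d) ℂ) a k))
        (fun k _ => Complex.normSq_nonneg _) (Finset.mem_univ b)
    have h5 : ‖(U : Matrix (Fin d) (Fin d) ℂ) a b‖ ^ 2 ≤ 1 := by
      rwa [← Complex.sq_norm] at h4
    nlinarith [norm_nonneg ((U : Matrix (Fin d) (Fin d) ℂ) a b)]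
  -- entries of F are uniformly bounded
  have hFbd : ∀ (U : Matrix.unitaryGroup (Fin d) ℂ) i j,
      ‖F U i j‖ ≤ ∑ l, ∑ k, ‖ρ k l‖ := by
    intro U i j
    calc ‖F U i j‖
        = ‖∑ l, (∑ k, (U : Matrix (Fin d) (Fin d) ℂ) i k * ρ k l) *
            (U : Matrix (Fin d) (Fin d) ℂ)ᴴ l j‖ := by
          simp [F, Matrix.mul_apply]
      _ ≤ ∑ l, ‖(∑ k, (U : Matrix (Fin d) (Fin d) ℂ) i k * ρ k l) *
            (U : Matrix (Fin d) (Fin d) ℂ)ᴴ l j‖ := norm_sum_le _ _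
      _ ≤ ∑ l, ∑ k, ‖ρ k l‖ := by
          refine Finset.sum_le_sum fun l _ => ?_
          rw [norm_mul]
          have hA : ‖∑ k, (U : Matrix (Fin d) (Fin d) ℂ) i k * ρ k l‖ ≤ ∑ k, ‖ρ k l‖ := by
            refine (norm_sum_le _ _).trans (Finset.sum_le_sum fun k _ => ?_)
            rw [norm_mul]
            calc ‖(U : Matrix (Fin d) (Fin d) ℂ) i k‖ * ‖ρ k l‖
                ≤ 1 * ‖ρ k l‖ := mul_le_mul_of_nonneg_right (hUbd U i k) (norm_nonneg _)
              _ = ‖ρ k l‖ := one_mul _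
          have hB : ‖(U : Matrix (Fin d) (Fin d) ℂ)ᴴ l j‖ ≤ 1 := by
            rw [Matrix.conjTranspose_apply, norm_star]
            exact hUbd U j l
          calc ‖∑ k, (U : Matrix (Fin d) (Fin d) ℂ) i k * ρ k l‖ *
                ‖(U : Matrix (Fin d) (Fin d) ℂ)ᴴ l j‖
              ≤ (∑ k, ‖ρ k l‖) * 1 := by
                refine mul_le_mul hA hB (norm_nonneg _) ?_
                exact Finset.sum_nonneg fun k _ => norm_nonneg _
            _ = ∑ k, ‖ρ k l‖ := mul_one _
  have hFint : ∀ i j, Integrable (fun U : Matrix.unitaryGroup (Fin d) ℂ => F U i j) μ := by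
    intro i j
    exact ⟨(hFcont i j).aestronglyMeasurable,
      HasFiniteIntegral.of_bounded (C := ∑ l, ∑ k, ‖ρ k l‖)
        (Filter.Eventually.of_forall fun U => hFbd U i j)⟩
  set M : Matrix (Fin d) (Fin d) ℂ := Matrix.of fun i j => ∫ U, F U i j ∂μ with hMdef
  have hMij : ∀ i j, M i j = ∫ U, F U i j ∂μ := fun i j => rfl
  -- invariance of M under conjugation by unitaries
  have key : ∀ V : Matrix.unitaryGroup (Fin d) ℂ,
      (V : Matrix (Fin d) (Fin d) ℂ) * M * (V : Matrix (Fin d) (Fin d) ℂ)ᴴ = M := by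
    intro V
    have h1 : ∀ U : Matrix.unitaryGroup (Fin d) ℂ, F (V * U) =
        (V : Matrix (Fin d) (Fin d) ℂ) * F U * (V : Matrix (Fin d) (Fin d) ℂ)ᴴ := by
      intro U
      show ((V * U : Matrix.unitaryGroup (Fin d) ℂ) : Matrix (Fin d) (Fin d) ℂ) * ρ *
        ((V * U : Matrix.unitaryGroup (Fin d) ℂ) : Matrix (Fin d) (Fin d) ℂ)ᴴ = _
      simp [F, Matrix.conjTranspose_mul, Matrix.mul_assoc]
    have expand : ∀ (X : Matrix (Fin d) (Fin d) ℂ) i j,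
        ((V : Matrix (Fin d) (Fin d) ℂ) * X * (V : Matrix (Fin d) (Fin d) ℂ)ᴴ) i j =
        ∑ l, ∑ k, (V : Matrix (Fin d) (Fin d) ℂ) i k * X k l *
          (V : Matrix (Fin d) (Fin d) ℂ)ᴴ l j := by
      intro X i j
      simp [Matrix.mul_apply, Finset.sum_mul]
    ext i j
    have h2 : (∫ U, F (V * U) i j ∂μ) = M i j :=
      integral_mul_left_eq_self (fun U : Matrix.unitaryGroup (Fin d) ℂ => F U i j) V
    rw [← h2]
    have h3 : (∫ U, F (V * U) i j ∂μ) = ∑ l, ∑ k,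
        (V : Matrix (Fin d) (Fin d) ℂ) i k * M k l * (V : Matrix (Fin d) (Fin d) ℂ)ᴴ l j := by
      simp_rw [h1, expand]
      rw [integral_finset_sum _ (fun l _ => by
        exact integrable_finset_sum _ (fun k _ => ((hFint k l).const_mul _).mul_const _))]
      refine Finset.sum_congr rfl fun l _ => ?_
      rw [integral_finset_sum _ (fun k _ => ((hFint k l).const_mul _).mul_const _)]
      refine Finset.sum_congr rfl fun k _ => ?_
      rw [integral_mul_const, integral_const_mul, hMij]
    rw [h3, expand M i j]
  -- off-diagonal entries vanish
  have offdiag : ∀ i j, i ≠ j → M i j = 0 := by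
    intro i j hij
    set e : Fin d → ℂ := fun k => if k = i then -1 else 1 with he
    have hstar : star e = e := by
      funext k
      by_cases h : k = i <;> simp [e, h]
    have hmem : Matrix.diagonal e ∈ Matrix.unitaryGroup (Fin d) ℂ := by
      rw [Matrix.mem_unitaryGroup_iff]
      rw [Matrix.star_eq_conjTranspose, Matrix.diagonal_conjTranspose, hstar,
        Matrix.diagonal_mul_diagonal]
      ext a b
      by_cases h : a = b
      · subst h
        by_cases ha : a = i <;> simp [Matrix.diagonal_apply, e, ha, Matrix.one_apply]
      · simp [Matrix.diagonal_apply, h, Matrix.one_apply]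
    have hk := key ⟨Matrix.diagonal e, hmem⟩
    have h2 : (Matrix.diagonal e * M * (Matrix.diagonal e)ᴴ) i j = M i j := by
      rw [hk]
    rw [Matrix.diagonal_conjTranspose, hstar, Matrix.mul_diagonal, Matrix.diagonal_mul] at h2
    have hei : e i = -1 := by simp [e]
    have hej : e j = 1 := by simp [e, (Ne.symm hij : ¬ j = i)]
    rw [hei, hej] at h2
    have hneg : -(M i j) = M i j := by linear_combination h2
    linear_combination -hneg / 2
  -- diagonal entries are all equal
  have diag : ∀ i j : Fin d, M i i = M j j := by
    intro i j
    set σ := Equiv.swap i j with hσ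
    set P : Matrix (Fin d) (Fin d) ℂ := Matrix.of fun k l => if l = σ k then 1 else 0 with hP
    have hmem : P ∈ Matrix.unitaryGroup (Fin d) ℂ := by
      rw [Matrix.mem_unitaryGroup_iff]
      ext a b
      simp only [Matrix.mul_apply, Matrix.star_eq_conjTranspose, Matrix.conjTranspose_apply,
        Matrix.of_apply, P, Matrix.one_apply]
      by_cases h : a = b
      · subst h
        simp [apply_ite, Finset.sum_ite_eq', Finset.mem_univ]
      · have hσab : σ a ≠ σ b := fun hc => h (σ.injective hc)
        rw [Finset.sum_eq_zero]
        · simp [h]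
        · intro k _
          by_cases h1 : k = σ a <;> by_cases h2 : k = σ b <;> simp_all
    have hk := key ⟨P, hmem⟩
    have h2 : (P * M * Pᴴ) i i = M i i := by rw [hk]
    have hPM : ∀ a l, (P * M) a l = M (σ a) l := by
      intro a l
      simp [Matrix.mul_apply, P, Finset.sum_ite_eq', Finset.mem_univ]
    have h3 : (P * M * Pᴴ) i i = M (σ i) (σ i) := by
      simp only [Matrix.mul_apply, hPM, Matrix.conjTranspose_apply, Matrix.of_apply, P]
      simp [apply_ite, Finset.sum_ite_eq', Finset.mem_univ]
    rw [h3, hσ] at h2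
    simpa [Equiv.swap_apply_left] using h2.symm
  -- M is scalar
  have i0 : Fin d := ⟨0, hd⟩
  set c : ℂ := M i0 i0 with hc
  have hM : M = c • (1 : Matrix (Fin d) (Fin d) ℂ) := by
    ext i j
    by_cases h : i = j
    · subst h
      simp [Matrix.one_apply, hc, diag i i0]
    · simp [Matrix.one_apply, h, offdiag i j h]
  -- trace of M is 1
  have htrM : M.trace = 1 := by
    have h1 : M.trace = ∫ U, (F U).trace ∂μ := by
      simp only [Matrix.trace, Matrix.diag]
      rw [integral_finset_sum _ (fun i _ => hFint i i)]
      rfl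
    have h2 : ∀ U : Matrix.unitaryGroup (Fin d) ℂ, (F U).trace = 1 := by
      intro U
      have hu : (U : Matrix (Fin d) (Fin d) ℂ)ᴴ * (U : Matrix (Fin d) (Fin d) ℂ) = 1 := by
        have := U.2
        rw [Matrix.mem_unitaryGroup_iff'] at this
        simpa [Matrix.star_eq_conjTranspose] using this
      calc (F U).trace
          = ((U : Matrix (Fin d) (Fin d) ℂ)ᴴ * ((U : Matrix (Fin d) (Fin d) ℂ) * ρ)).trace := by
            rw [← Matrix.trace_mul_comm]
        _ = ρ.trace := by rw [← Matrix.mul_assoc, hu, Matrix.one_mul]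
        _ = 1 := hρ
    rw [h1]
    simp [h2]
  have hd0 : (d : ℂ) ≠ 0 := Nat.cast_ne_zero.mpr (by omega)
  have hcd : c * d = 1 := by
    rw [← htrM, hM, Matrix.trace_smul, Matrix.trace_one]
    simp [Fintype.card_fin, smul_eq_mul]
  have hcval : c = 1 / (d : ℂ) := (eq_div_iff hd0).mpr hcd
  -- final computation
  have hgoal : (∫ U : Matrix.unitaryGroup (Fin d) ℂ, (F U * H).trace ∂μ) = (M * H).trace := by
    simp only [Matrix.trace, Matrix.diag, Matrix.mul_apply]
    rw [integral_finset_sum _ (fun i _ =>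
      integrable_finset_sum _ (fun j _ => (hFint i j).mul_const _))]
    refine Finset.sum_congr rfl fun i _ => ?_
    rw [integral_finset_sum _ (fun j _ => (hFint i j).mul_const _)]
    refine Finset.sum_congr rfl fun j _ => ?_
    rw [integral_mul_const]
    rfl
  calc ∫ U : Matrix.unitaryGroup (Fin d) ℂ,
        ((U : Matrix (Fin d) (Fin d) ℂ) * ρ * (U : Matrix (Fin d) (Fin d) ℂ)ᴴ * H).trace ∂μ
      = (M * H).trace := hgoal
    _ = c * H.trace := by rw [hM]; simp [Matrix.smul_mul, Matrix.trace_smul, smul_eq_mul]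
    _ = H.trace / (d : ℂ) := by rw [hcval]; ring
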